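/- Let Λ be a Bedford–McMullen carpet with non-uniform vertical fibres, and set t' = ( ∑_{ĵ=1}^M N_ĵ^{1/γ}·log N_ĵ ) / ( ∑_{ĵ=1}^M N_ĵ^{1/γ} ). Then for every s ≥ dim_H Λ and every t ∈ [min_ĵ log N_ĵ, max_ĵ log N_ĵ], one has T_s(t) ≥ t, with equality if and only if s = dim_H Λ and t = t'. -/

import Mathlib

open Filter Set MeasureTheory
open scoped ENNReal NNReal Topology

noncomputable section

/-- The data defining a Bedford–McMullen carpet: an `m × n` grid with `n > m ≥ 2` and a
nonempty set `A` of selected rectangles, with more than one nonempty column. -/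
structure BMData where
  m : ℕ
  n : ℕ
  two_le_m : 2 ≤ m
  m_lt_n : m < n
  A : Finset (Fin m × Fin n)
  A_nonempty : A.Nonempty
  one_lt_cols : 1 < (A.image Prod.fst).card

namespace BMData

variable (C : BMData)

/-- The affine contraction `f_{(i,j)}` associated to a selected rectangle `(i, j) ∈ A`
(with the grid indexed from `0` rather than from `1`). -/
def map (p : Fin C.m × Fin C.n) (x : ℝ × ℝ) : ℝ × ℝ :=
  (x.1 / C.m + (p.1 : ℝ) / C.m, x.2 / C.n + (p.2 : ℝ) / C.n)

/-- `Λ` is the attractor of the iterated function system: the unique nonempty compact set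
satisfying `Λ = ⋃_{p ∈ A} f_p(Λ)`. -/
def IsAttractor (Λ : Set (ℝ × ℝ)) : Prop :=
  Λ.Nonempty ∧ IsCompact Λ ∧ Λ = ⋃ p ∈ C.A, C.map p '' Λ

/-- The (finite set of) nonempty columns. -/
def cols : Finset (Fin C.m) := C.A.image Prod.fst

/-- `M`, the number of nonempty columns. -/
def M : ℕ := C.cols.card

/-- `N`, the total number of maps. -/
def N : ℕ := C.A.card

/-- The number `N_î` of maps in column `î`. -/
def colCount (i : Fin C.m) : ℕ := (C.A.filter fun p => p.1 = i).card

/-- Non-uniform vertical fibres: the column counts are not all equal. -/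
def NonUniform : Prop :=
  ∃ i ∈ C.cols, ∃ j ∈ C.cols, C.colCount i ≠ C.colCount j

/-- `γ = log n / log m`. -/
def gamma : ℝ := Real.log C.n / Real.log C.m

/-- `t̲ = (1/M) ∑_ĵ log N_ĵ`. -/
def tLow : ℝ := (1 / (C.M : ℝ)) * ∑ j ∈ C.cols, Real.log (C.colCount j)

/-- `t̄ = ∑_ĵ (N_ĵ/N) log N_ĵ`. -/
def tUp : ℝ := ∑ j ∈ C.cols, ((C.colCount j : ℝ) / (C.N : ℝ)) * Real.log (C.colCount j)

/-- The large deviations rate function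
`I(t) = sup_λ (λt − log((1/M) ∑_ĵ N_ĵ^λ))`. -/
def rate (t : ℝ) : ℝ :=
  ⨆ l : ℝ, (l * t - Real.log ((1 / (C.M : ℝ)) * ∑ j ∈ C.cols, (C.colCount j : ℝ) ^ l))

/-- The map `T_s(t) = (s − log M/log m)·log n + γ·I(t)`. -/
def T (s t : ℝ) : ℝ :=
  (s - Real.log C.M / Real.log C.m) * Real.log C.n + C.gamma * C.rate t

/-- The sequence `t_ℓ(s)`, shifted so that `t_L(s) = tseq s (L - 1)`:
`tseq s 0 = t_1(s) = (s − log M/log m)·log n` and `tseq s (k+1) = T_s (tseq s k)`. -/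
def tseq (s : ℝ) : ℕ → ℝ
  | 0 => (s - Real.log C.M / Real.log C.m) * Real.log C.n
  | k + 1 => C.T s (tseq s k)

/-- The Hausdorff dimension of the carpet (Bedford–McMullen formula). -/
def dimH : ℝ :=
  (1 / Real.log C.m) *
    Real.log (∑ j ∈ C.cols, (C.colCount j : ℝ) ^ (Real.log C.m / Real.log C.n))

/-- The box dimension of the carpet (Bedford–McMullen formula). -/
def dimB : ℝ :=
  Real.log C.N / Real.log C.n + (1 - Real.log C.m / Real.log C.n) * (Real.log C.M / Real.log C.m)

/-- `(M₀, Ñ_1 > ⋯ > Ñ_{M₀}, R_1, …, R_{M₀})` are the parameters of the carpet: `Ñ` lists the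
distinct values among the column counts in strictly decreasing order, and `R î` is the number
of nonempty columns whose count equals `Ñ î`. -/
def HasParams (M0 : ℕ) (Nt R : Fin M0 → ℕ) : Prop :=
  (∀ i j : Fin M0, i < j → Nt j < Nt i) ∧
  (∀ i : Fin M0, 0 < R i) ∧
  (∀ c ∈ C.cols, ∃ i : Fin M0, C.colCount c = Nt i) ∧
  (∀ i : Fin M0, R i = (C.cols.filter fun c => C.colCount c = Nt i).card)

/-- `ψ_{ī|k}(s) = M^{kγ}·n^{−sk}·∏_{ℓ=1}^k N_{i_ℓ}` for a word `ī` of length `J` over the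
alphabet of nonempty columns. -/
def psi (s : ℝ) {J : ℕ} (w : Fin J → {c // c ∈ C.cols}) (k : ℕ) : ℝ :=
  (C.M : ℝ) ^ ((k : ℝ) * C.gamma) * (C.n : ℝ) ^ (-(s * (k : ℝ))) *
    ∏ l ∈ Finset.univ.filter (fun l : Fin J => (l : ℕ) < k), (C.colCount (w l).1 : ℝ)

/-- `Ψ_J(s) = ∑_{ī} min_{0 ≤ k ≤ J} ψ_{ī|k}(s)`. -/
def Psi (J : ℕ) (s : ℝ) : ℝ :=
  ∑ w : Fin J → {c // c ∈ C.cols}, ⨅ k : Fin (J + 1), C.psi s w (k : ℕ)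

open Classical in
/-- `∑_{ī : ψ_{ī|J}(s) ≤ 1} ψ_{ī|J}(s)`. -/
def psiSumLe (s : ℝ) (J : ℕ) : ℝ :=
  ∑ w : Fin J → {c // c ∈ C.cols}, if C.psi s w J ≤ 1 then C.psi s w J else 0

/-- `H(Q*_t)`: the maximal entropy of a probability vector `q` on the nonempty columns
subject to `∑_ĵ q_ĵ log N_ĵ = t`. -/
def entMax (t : ℝ) : ℝ :=
  sSup { h : ℝ | ∃ q : Fin C.m → ℝ, (∀ j, 0 ≤ q j) ∧ (∀ j ∉ C.cols, q j = 0) ∧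
    (∑ j ∈ C.cols, q j) = 1 ∧ (∑ j ∈ C.cols, q j * Real.log (C.colCount j)) = t ∧
    h = -∑ j ∈ C.cols, q j * Real.log (q j) }

/-- A probability vector on the nonempty columns. -/
def IsProbVec (p : Fin C.m → ℝ) : Prop :=
  (∀ j, 0 ≤ p j) ∧ (∀ j ∉ C.cols, p j = 0) ∧ (∑ j ∈ C.cols, p j) = 1

/-- `∑_ĵ p_ĵ log N_ĵ`. -/
def colAvg (p : Fin C.m → ℝ) : ℝ := ∑ j ∈ C.cols, p j * Real.log (C.colCount j)

/-- The relative entropy `H(p‖P)` where `P = (N_1/N, …, N_M/N)`. -/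
def relEntP (p : Fin C.m → ℝ) : ℝ :=
  ∑ j ∈ C.cols, p j * Real.log (p j / ((C.colCount j : ℝ) / (C.N : ℝ)))

/-- The relative entropy `H(p‖Q)` where `Q = (1/M, …, 1/M)`. -/
def relEntQ (p : Fin C.m → ℝ) : ℝ :=
  ∑ j ∈ C.cols, p j * Real.log (p j / (1 / (C.M : ℝ)))

/-- The function `β(ξ)` of the multifractal spectrum of the uniform self-affine measure. -/
def beta (ξ : ℝ) : ℝ :=
  (1 / Real.log C.m) * (-(ξ * Real.log C.N) +
    Real.log (∑ j ∈ C.cols, (C.colCount j : ℝ) ^ (C.gamma⁻¹ + (1 - C.gamma⁻¹) * ξ)))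

/-- `f(α) = inf_ξ (αξ + β(ξ))`. -/
def fspec (α : ℝ) : ℝ := ⨅ ξ : ℝ, (α * ξ + C.beta ξ)

end BMData

/-- The lower `θ`-intermediate dimension of a set in a metric space. -/
def lowerInterDim {X : Type*} [MetricSpace X] (θ : ℝ) (F : Set X) : ℝ :=
  sInf { s : ℝ | 0 ≤ s ∧ ∀ ε > 0, ∀ δ₀ > 0, ∃ δ : ℝ, 0 < δ ∧ δ ≤ δ₀ ∧
    ∃ 𝒰 : Set (Set X), 𝒰.Countable ∧ F ⊆ ⋃₀ 𝒰 ∧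
      (∀ U ∈ 𝒰, δ ^ (1 / θ) ≤ Metric.diam U ∧ Metric.diam U ≤ δ) ∧
      (∑' U : 𝒰, ENNReal.ofReal (Metric.diam (U : Set X) ^ s)) ≤ ENNReal.ofReal ε }

/-- The upper `θ`-intermediate dimension of a set in a metric space. -/
def upperInterDim {X : Type*} [MetricSpace X] (θ : ℝ) (F : Set X) : ℝ :=
  sInf { s : ℝ | 0 ≤ s ∧ ∀ ε > 0, ∃ δ₀ > 0, ∀ δ : ℝ, 0 < δ → δ ≤ δ₀ →
    ∃ 𝒰 : Set (Set X), 𝒰.Countable ∧ F ⊆ ⋃₀ 𝒰 ∧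
      (∀ U ∈ 𝒰, δ ^ (1 / θ) ≤ Metric.diam U ∧ Metric.diam U ≤ δ) ∧
      (∑' U : 𝒰, ENNReal.ofReal (Metric.diam (U : Set X) ^ s)) ≤ ENNReal.ofReal ε }

/-- The topological support of a Borel measure: the set of points all of whose
neighbourhoods have positive measure. -/
def measSupport {X : Type*} [MetricSpace X] [MeasurableSpace X] (μ : Measure X) : Set X :=
  { x | ∀ r : ℝ, 0 < r → 0 < μ (Metric.ball x r) }

/-- `S^s_{δ,θ}(F)`: the infimal `s`-cost of a countable cover of `F` by sets of diameter
between `δ^{1/θ}` and `δ`. -/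
def interCost {X : Type*} [MetricSpace X] (F : Set X) (θ s δ : ℝ) : ℝ≥0∞ :=
  sInf { c : ℝ≥0∞ | ∃ 𝒰 : Set (Set X), 𝒰.Countable ∧ F ⊆ ⋃₀ 𝒰 ∧
    (∀ U ∈ 𝒰, δ ^ (1 / θ) ≤ Metric.diam U ∧ Metric.diam U ≤ δ) ∧
    c = ∑' U : 𝒰, ENNReal.ofReal (Metric.diam (U : Set X) ^ s) }


/-
Write `L(λ) = log((1/M) ∑_ĵ N_ĵ^λ)`, so that `I(t) = sup_λ (λt − L(λ))`. Evaluating the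
supremum at `λ = 1/γ` and inserting the Bedford–McMullen formula for `dim_H Λ` gives the identity
`T_s(t) − t = (s − dim_H Λ) log n + γ (I(t) − (t/γ − L(1/γ)))`, with both summands nonnegative
(the supremum is finite because `t` lies between the smallest and largest `log N_ĵ`).
Since `L` is convex, `λ = 1/γ` attains the supremum exactly when `t = L'(1/γ)`, and `L'(1/γ) = t'`.
-/

open Real

section LogSumRpow

variable {ι : Type*} {s : Finset ι} {b : ι → ℝ}

lemma mul_log_le_log_sum_rpow (hb : ∀ i ∈ s, 0 < b i) {i : ι} (hi : i ∈ s) (l : ℝ) :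
    l * log (b i) ≤ log (∑ j ∈ s, b j ^ l) := by
  rw [← log_rpow (hb i hi)]
  exact log_le_log (rpow_pos_of_pos (hb i hi) l)
    (Finset.single_le_sum (fun j hj => (rpow_pos_of_pos (hb j hj) l).le) hi)

lemma sum_rpow_pos (hb : ∀ i ∈ s, 0 < b i) (hs : s.Nonempty) (l : ℝ) :
    0 < ∑ i ∈ s, b i ^ l :=
  Finset.sum_pos (fun i hi => rpow_pos_of_pos (hb i hi) l) hs

lemma hasDerivAt_log_sum_rpow (hb : ∀ i ∈ s, 0 < b i) (hs : s.Nonempty) (l : ℝ) :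
    HasDerivAt (fun l => log (∑ i ∈ s, b i ^ l))
      ((∑ i ∈ s, b i ^ l * log (b i)) / ∑ i ∈ s, b i ^ l) l :=
  (HasDerivAt.fun_sum fun i hi =>
    (hasStrictDerivAt_const_rpow (hb i hi) l).hasDerivAt).log (sum_rpow_pos hb hs l).ne'

/-- Convexity of `λ ↦ log ∑ bᵢ^λ`: its graph lies above its tangent lines. -/
lemma log_sum_rpow_tangent_le (hb : ∀ i ∈ s, 0 < b i) (hs : s.Nonempty) (l₀ l : ℝ) :
    log (∑ i ∈ s, b i ^ l₀) + (l - l₀) * ((∑ i ∈ s, b i ^ l₀ * log (b i)) / ∑ i ∈ s, b i ^ l₀)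
      ≤ log (∑ i ∈ s, b i ^ l) := by
  set S := ∑ i ∈ s, b i ^ l₀
  have hS : 0 < S := sum_rpow_pos hb hs l₀
  -- Jensen for `exp` with weights `bᵢ^l₀ / S` at the points `(l - l₀) log bᵢ`
  have hJensen := convexOn_exp.map_sum_le (t := s) (w := fun i => b i ^ l₀ / S)
    (p := fun i => (l - l₀) * log (b i))
    (fun i hi => div_nonneg (rpow_pos_of_pos (hb i hi) l₀).le hS.le)
    (by rw [← Finset.sum_div, div_self hS.ne']) (fun _ _ => Set.mem_univ _)
  have hmean : ∑ i ∈ s, b i ^ l₀ / S * ((l - l₀) * log (b i))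
      = (l - l₀) * ((∑ i ∈ s, b i ^ l₀ * log (b i)) / S) := by
    rw [Finset.sum_div, Finset.mul_sum]
    exact Finset.sum_congr rfl fun i _ => by ring
  have htilt : ∑ i ∈ s, b i ^ l₀ / S * exp ((l - l₀) * log (b i)) = (∑ i ∈ s, b i ^ l) / S := by
    rw [Finset.sum_div]
    refine Finset.sum_congr rfl fun i hi => ?_
    rw [mul_comm (l - l₀), ← rpow_def_of_pos (hb i hi), div_mul_eq_mul_div,
      ← rpow_add (hb i hi), add_sub_cancel]
  simp only [smul_eq_mul, hmean, htilt] at hJensen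
  have := log_le_log (exp_pos _) hJensen
  rw [log_exp, log_div (sum_rpow_pos hb hs l).ne' hS.ne'] at this
  linarith

end LogSumRpow

namespace BMData

variable (C : BMData)

lemma cols_nonempty : C.cols.Nonempty :=
  Finset.card_pos.mp (zero_lt_one.trans C.one_lt_cols)

lemma M_pos : (0 : ℝ) < C.M := by
  exact_mod_cast zero_lt_one.trans C.one_lt_cols

lemma colCount_pos {j : Fin C.m} (hj : j ∈ C.cols) : (0 : ℝ) < C.colCount j := by
  obtain ⟨p, hp, hpj⟩ := Finset.mem_image.mp hj
  exact_mod_cast Finset.card_pos.mpr ⟨p, Finset.mem_filter.mpr ⟨hp, hpj⟩⟩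

lemma log_m_pos : 0 < log C.m := by
  apply log_pos; exact_mod_cast one_lt_two.trans_le C.two_le_m

lemma log_n_pos : 0 < log C.n := by
  apply log_pos; exact_mod_cast one_lt_two.trans_le (C.two_le_m.trans C.m_lt_n.le)

lemma gamma_pos : 0 < C.gamma := div_pos C.log_n_pos C.log_m_pos

/-- The function of `λ` whose supremum is `I(t)`. -/
def legendreObj (t l : ℝ) : ℝ :=
  l * t - log ((1 / (C.M : ℝ)) * ∑ j ∈ C.cols, (C.colCount j : ℝ) ^ l)

lemma legendreObj_eq (t l : ℝ) :
    C.legendreObj t l = l * t - log (∑ j ∈ C.cols, (C.colCount j : ℝ) ^ l) + log C.M := by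
  rw [legendreObj, log_mul (one_div_ne_zero C.M_pos.ne')
    (sum_rpow_pos (fun j => C.colCount_pos) C.cols_nonempty l).ne', one_div, log_inv]
  ring

variable {C}

lemma legendreObj_le_log_M {t : ℝ}
    (hlo : (⨅ j : {c // c ∈ C.cols}, log (C.colCount j.1)) ≤ t)
    (hhi : t ≤ ⨆ j : {c // c ∈ C.cols}, log (C.colCount j.1)) (l : ℝ) :
    C.legendreObj t l ≤ log C.M := by
  have : Nonempty {c // c ∈ C.cols} := C.cols_nonempty.coe_sort
  obtain ⟨jmin, hjmin⟩ := exists_eq_ciInf_of_finite (f := fun j : {c // c ∈ C.cols} =>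
    log (C.colCount j.1))
  obtain ⟨jmax, hjmax⟩ := exists_eq_ciSup_of_finite (f := fun j : {c // c ∈ C.cols} =>
    log (C.colCount j.1))
  have hpos : ∀ j ∈ C.cols, (0 : ℝ) < C.colCount j := fun j => C.colCount_pos
  rw [legendreObj_eq]
  rcases le_total 0 l with hl | hl
  · have := mul_log_le_log_sum_rpow hpos jmax.2 l
    nlinarith [mul_le_mul_of_nonneg_left (hjmax ▸ hhi) hl]
  · have := mul_log_le_log_sum_rpow hpos jmin.2 l
    nlinarith [mul_le_mul_of_nonpos_left (hjmin ▸ hlo) hl]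

lemma rate_eq_legendreObj_iff {t : ℝ} (hbdd : BddAbove (Set.range (C.legendreObj t))) (l₀ : ℝ) :
    C.rate t = C.legendreObj t l₀ ↔
      t = (∑ j ∈ C.cols, (C.colCount j : ℝ) ^ l₀ * log (C.colCount j))
        / ∑ j ∈ C.cols, (C.colCount j : ℝ) ^ l₀ := by
  have hpos : ∀ j ∈ C.cols, (0 : ℝ) < C.colCount j := fun j => C.colCount_pos
  change ⨆ l, C.legendreObj t l = _ ↔ _
  constructor
  · intro hmax
    have hloc : IsLocalMax (C.legendreObj t) l₀ :=
      IsMaxOn.isLocalMax (fun l _ => hmax ▸ le_ciSup hbdd l) Filter.univ_mem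
    have hderiv : HasDerivAt (C.legendreObj t) (t - (∑ j ∈ C.cols, (C.colCount j : ℝ) ^ l₀ *
        log (C.colCount j)) / ∑ j ∈ C.cols, (C.colCount j : ℝ) ^ l₀) l₀ := by
      simp only [funext (C.legendreObj_eq t)]
      simpa using ((hasDerivAt_mul_const t).sub
        (hasDerivAt_log_sum_rpow hpos C.cols_nonempty l₀)).add_const (log C.M)
    exact sub_eq_zero.mp (hloc.hasDerivAt_eq_zero hderiv)
  · intro ht
    refine le_antisymm (ciSup_le fun l => ?_) (le_ciSup hbdd l₀)
    have := log_sum_rpow_tangent_le hpos C.cols_nonempty l₀ l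
    rw [← ht] at this
    rw [legendreObj_eq, legendreObj_eq]
    linarith

lemma one_div_gamma : 1 / C.gamma = log C.m / log C.n := one_div_div _ _

lemma T_sub_self (s t : ℝ) :
    C.T s t - t =
      (s - C.dimH) * log C.n + C.gamma * (C.rate t - C.legendreObj t (1 / C.gamma)) := by
  have hm := C.log_m_pos.ne'
  have hn := C.log_n_pos.ne'
  rw [T, legendreObj_eq, dimH, one_div_gamma, gamma]
  field_simp
  ring

end BMData

theorem statement17_general (C : BMData) (tp : ℝ)
    (htp : tp = (∑ j ∈ C.cols, (C.colCount j : ℝ) ^ (1 / C.gamma) * Real.log (C.colCount j))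
        / (∑ j ∈ C.cols, (C.colCount j : ℝ) ^ (1 / C.gamma)))
    (s : ℝ) (hs : C.dimH ≤ s) (t : ℝ)
    (ht1 : (⨅ j : {c // c ∈ C.cols}, Real.log (C.colCount j.1)) ≤ t)
    (ht2 : t ≤ ⨆ j : {c // c ∈ C.cols}, Real.log (C.colCount j.1)) :
    t ≤ C.T s t ∧ (C.T s t = t ↔ s = C.dimH ∧ t = tp) := by
  have hbdd : BddAbove (Set.range (C.legendreObj t)) :=
    ⟨_, Set.forall_mem_range.mpr (BMData.legendreObj_le_log_M ht1 ht2)⟩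
  have hkey := C.T_sub_self s t
  have hdim : 0 ≤ (s - C.dimH) * Real.log C.n := mul_nonneg (sub_nonneg.2 hs) C.log_n_pos.le
  have hgap : 0 ≤ C.gamma * (C.rate t - C.legendreObj t (1 / C.gamma)) :=
    mul_nonneg C.gamma_pos.le (sub_nonneg.2 (le_ciSup hbdd _))
  have hrate := BMData.rate_eq_legendreObj_iff hbdd (1 / C.gamma)
  rw [← htp] at hrate
  refine ⟨by linarith, fun hT => ⟨?_, hrate.mp ?_⟩, fun ⟨hs', ht'⟩ => ?_⟩
  · have hdim0 : (s - C.dimH) * Real.log C.n = 0 := by linarith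
    linarith [(mul_eq_zero.mp hdim0).resolve_right C.log_n_pos.ne']
  · have hgap0 : C.gamma * (C.rate t - C.legendreObj t (1 / C.gamma)) = 0 := by linarith
    linarith [(mul_eq_zero.mp hgap0).resolve_left C.gamma_pos.ne']
  · subst hs'
    rw [hrate.mpr ht'] at hkey
    linarith

/-- **Lemma 4.1.** With `t' = (∑_ĵ N_ĵ^{1/γ} log N_ĵ)/(∑_ĵ N_ĵ^{1/γ})`, for every
`s ≥ dim_H Λ` and every `t ∈ [min_ĵ log N_ĵ, max_ĵ log N_ĵ]` one has `T_s(t) ≥ t`, with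
equality iff `s = dim_H Λ` and `t = t'`. -/
theorem statement17 (C : BMData) (hnu : C.NonUniform) (tp : ℝ)
    (htp : tp = (∑ j ∈ C.cols, (C.colCount j : ℝ) ^ (1 / C.gamma) * Real.log (C.colCount j))
        / (∑ j ∈ C.cols, (C.colCount j : ℝ) ^ (1 / C.gamma)))
    (s : ℝ) (hs : C.dimH ≤ s) (t : ℝ)
    (ht1 : (⨅ j : {c // c ∈ C.cols}, Real.log (C.colCount j.1)) ≤ t)
    (ht2 : t ≤ ⨆ j : {c // c ∈ C.cols}, Real.log (C.colCount j.1)) :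
    t ≤ C.T s t ∧ (C.T s t = t ↔ s = C.dimH ∧ t = tp) :=
  statement17_general C tp htp s hs t ht1 ht2
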